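/- Let N ≥ 1, let Γ_i be a strategy set for each i ∈ Fin N, let F be a feasibility predicate on Π_i Γ_i, let A_i : Γ_i → ℝ, let B_{ij} : Γ_i × Γ_j → ℝ for i ≠ j satisfy B_{ij}(a,b) = B_{ji}(b,a), and let c_i > 0 be real numbers. Define J^i(γ) = A_i(γ_i) + c_i·Σ_{j≠i} B_{ij}(γ_i,γ_j) and P(γ) = Σ_i (Π_{j≠i} c_j)·A_i(γ_i) + (Π_l c_l)·Σ_{i<j} B_{ij}(γ_i,γ_j). Then every feasible γ* satisfying P(γ*) ≤ P(γ) for all feasible γ is a generalized Nash equilibrium: for every player i and every γ'_i such that the unilateral deviation of γ* by γ'_i is feasible, J^i(γ*) ≤ J^i of that deviation. -/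

import Mathlib

/-!
Under a unilateral deviation of player `i`, the own costs of the other players and the
interactions between two other players do not change, and by the symmetry of `B` every pair
`{i, j}` can be read from `i`'s side. Hence `P` changes by exactly `∏_{j≠i} c j` times the change
of `Jⁱ`: `P` is a weighted potential with positive weights, so no feasible unilateral deviation
from a feasible minimizer of `P` lowers the deviating player's cost.
-/

open Finset Function

section Sums

variable {ι M : Type*} [Fintype ι]

theorem sum_apply_update_sub_sum [AddCommGroup M] [DecidableEq ι] {Γ : ι → Type*}
    (f : ∀ i, Γ i → M) (γ : ∀ i, Γ i) (i : ι) (a : Γ i) :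
    ∑ k, f k (update γ i a k) - ∑ k, f k (γ k) = f i a - f i (γ i) := by
  simp_rw [apply_update f]
  rw [sum_update_of_mem (mem_univ i),
    sum_eq_add_sum_sdiff_singleton_of_mem (mem_univ i) (fun k => f k (γ k))]
  abel

variable [LinearOrder ι]

theorem sum_sum_lt_eq_sum_erase_add [AddCommMonoid M] (g : ι → ι → M)
    (hg : ∀ k l, k ≠ l → g k l = g l k) (i : ι) :
    ∑ k, ∑ l ∈ univ.filter (k < ·), g k l
      = ∑ l ∈ univ.erase i, g i l
        + ∑ k ∈ univ.erase i, ∑ l ∈ (univ.erase i).filter (k < ·), g k l := by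
  have hrow : ∀ k ∈ univ.erase i, ∑ l ∈ univ.filter (k < ·), g k l
      = (if k < i then g i k else 0) + ∑ l ∈ (univ.erase i).filter (k < ·), g k l := by
    intro k hk
    rw [sum_filter, sum_filter, ← add_sum_erase _ _ (mem_univ i)]
    split_ifs with hki
    · rw [hg k i hki.ne]
    · rfl
  have hi : ∑ l ∈ univ.filter (i < ·), g i l
      = ∑ l ∈ univ.erase i, if i < l then g i l else 0 := by
    rw [sum_filter, ← add_sum_erase _ _ (mem_univ i), if_neg (lt_irrefl i), zero_add]
  have hsplit : ∀ l ∈ univ.erase i,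
      (if i < l then g i l else 0) + (if l < i then g i l else 0) = g i l := by
    intro l hl
    rcases lt_or_gt_of_ne (ne_of_mem_erase hl) with h | h <;> simp [h, h.not_gt]
  rw [← add_sum_erase _ _ (mem_univ i), sum_congr rfl hrow, sum_add_distrib, hi, ← add_assoc,
    ← sum_add_distrib, sum_congr rfl hsplit]

theorem sum_sum_lt_apply_update_sub [AddCommGroup M] {Γ : ι → Type*}
    (B : ∀ k l, Γ k × Γ l → M)
    (hB : ∀ k l, k ≠ l → ∀ a b, B k l (a, b) = B l k (b, a)) (γ : ∀ i, Γ i) (i : ι) (a : Γ i) :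
    ∑ k, ∑ l ∈ univ.filter (k < ·), B k l (update γ i a k, update γ i a l)
        - ∑ k, ∑ l ∈ univ.filter (k < ·), B k l (γ k, γ l)
      = ∑ l ∈ univ.erase i, (B i l (a, γ l) - B i l (γ i, γ l)) := by
  have hsymm : ∀ δ : ∀ i, Γ i, ∀ k l, k ≠ l → B k l (δ k, δ l) = B l k (δ l, δ k) :=
    fun δ k l hkl => hB k l hkl _ _
  have hrow : ∀ l ∈ univ.erase i, B i l (update γ i a i, update γ i a l) = B i l (a, γ l) :=
    fun l hl => by rw [update_self, update_of_ne (ne_of_mem_erase hl)]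
  have hrest : ∀ k ∈ univ.erase i,
      ∑ l ∈ (univ.erase i).filter (k < ·), B k l (update γ i a k, update γ i a l)
        = ∑ l ∈ (univ.erase i).filter (k < ·), B k l (γ k, γ l) :=
    fun k hk => sum_congr rfl fun l hl => by
      rw [update_of_ne (ne_of_mem_erase hk),
        update_of_ne (ne_of_mem_erase (mem_of_mem_filter l hl))]
  rw [sum_sum_lt_eq_sum_erase_add _ (hsymm _) i, sum_sum_lt_eq_sum_erase_add _ (hsymm γ) i,
    sum_congr rfl hrow, sum_congr rfl hrest, sum_sub_distrib]
  abel

end Sums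

section PotentialGame

variable {ι : Type*} {Γ : ι → Type*} [DecidableEq ι]

def IsWeightedPotential (J : ι → (∀ i, Γ i) → ℝ) (w : ι → ℝ) (P : (∀ i, Γ i) → ℝ) : Prop :=
  ∀ γ i a, P (update γ i a) - P γ = w i * (J i (update γ i a) - J i γ)

def IsGeneralizedNashEquilibrium (F : (∀ i, Γ i) → Prop) (J : ι → (∀ i, Γ i) → ℝ)
    (γ : ∀ i, Γ i) : Prop :=
  F γ ∧ ∀ i a, F (update γ i a) → J i γ ≤ J i (update γ i a)

theorem IsWeightedPotential.isGeneralizedNashEquilibrium_of_isMinOn {F : (∀ i, Γ i) → Prop}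
    {J : ι → (∀ i, Γ i) → ℝ} {w : ι → ℝ} {P : (∀ i, Γ i) → ℝ} {γ : ∀ i, Γ i}
    (hP : IsWeightedPotential J w P) (hw : ∀ i, 0 < w i) (hγ : F γ)
    (hmin : IsMinOn P {γ | F γ} γ) : IsGeneralizedNashEquilibrium F J γ := by
  refine ⟨hγ, fun i a ha => ?_⟩
  have hdecrease : 0 ≤ w i * (J i (update γ i a) - J i γ) :=
    hP γ i a ▸ sub_nonneg.2 (hmin ha)
  exact sub_nonneg.1 (nonneg_of_mul_nonneg_right hdecrease (hw i))

end PotentialGame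

theorem isWeightedPotential_of_ownCost_add_pairwise {ι : Type*} [Fintype ι] [LinearOrder ι]
    {Γ : ι → Type*} (A : ∀ i, Γ i → ℝ) (B : ∀ i j, Γ i × Γ j → ℝ)
    (hB : ∀ i j, i ≠ j → ∀ a b, B i j (a, b) = B j i (b, a)) (c : ι → ℝ)
    {J : ι → (∀ i, Γ i) → ℝ}
    (hJ : ∀ i γ, J i γ = A i (γ i) + c i * ∑ j ∈ univ.erase i, B i j (γ i, γ j))
    {P : (∀ i, Γ i) → ℝ}
    (hP : ∀ γ, P γ = ∑ i, (∏ j ∈ univ.erase i, c j) * A i (γ i)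
        + (∏ l, c l) * ∑ i, ∑ j ∈ univ.filter (i < ·), B i j (γ i, γ j)) :
    IsWeightedPotential J (fun i => ∏ j ∈ univ.erase i, c j) P := by
  intro γ i a
  have hown := sum_apply_update_sub_sum (fun k x => (∏ j ∈ univ.erase k, c j) * A k x) γ i a
  have hpair := sum_sum_lt_apply_update_sub B hB γ i a
  have hrow : ∑ j ∈ univ.erase i, B i j (a, update γ i a j) = ∑ j ∈ univ.erase i, B i j (a, γ j) :=
    sum_congr rfl fun j hj => by rw [update_of_ne (ne_of_mem_erase hj)]
  rw [sum_sub_distrib] at hpair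
  rw [hP, hP, hJ, hJ, update_self, hrow, ← mul_prod_erase univ c (mem_univ i)]
  linear_combination hown + (c i * ∏ j ∈ univ.erase i, c j) * hpair

theorem multiagent_own_coefficient_potential_minimizer_is_GNE_general
    {N : ℕ}
    (Γ : Fin N → Type*)
    (F : (∀ i, Γ i) → Prop)
    (A : ∀ i : Fin N, Γ i → ℝ)
    (B : ∀ i j : Fin N, Γ i × Γ j → ℝ)
    (hsym : ∀ (i j : Fin N), i ≠ j → ∀ (a : Γ i) (b : Γ j), B i j (a, b) = B j i (b, a))
    (c : Fin N → ℝ) (hc : ∀ i, 0 < c i)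
    (J : Fin N → (∀ i, Γ i) → ℝ)
    (hJ : ∀ (i : Fin N) (γ : ∀ j, Γ j),
      J i γ = A i (γ i) + c i * ∑ j ∈ Finset.univ.erase i, B i j (γ i, γ j))
    (P : (∀ i, Γ i) → ℝ)
    (hP : ∀ γ : ∀ i, Γ i,
      P γ = ∑ i : Fin N, (∏ j ∈ Finset.univ.erase i, c j) * A i (γ i)
        + (∏ l : Fin N, c l)
            * ∑ i : Fin N, ∑ j ∈ Finset.univ.filter (fun j => i < j),
                B i j (γ i, γ j)) :
    ∀ γstar : ∀ i, Γ i, F γstar → (∀ γ, F γ → P γstar ≤ P γ) →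
      ∀ (i : Fin N) (γ'i : Γ i), F (Function.update γstar i γ'i) →
        J i γstar ≤ J i (Function.update γstar i γ'i) := by
  intro γstar hF hmin
  have hpotential := isWeightedPotential_of_ownCost_add_pairwise A B hsym c hJ hP
  exact (hpotential.isGeneralizedNashEquilibrium_of_isMinOn
    (fun i => prod_pos fun j _ => hc j) hF (isMinOn_iff.2 hmin)).2

/-- Lemma 4 + Theorem 1 of the paper, constant coefficients: when each
agent `i`'s cost is `Jⁱ(γ) = A i (γ i) + c i · ∑_{j≠i} B i j (γ i, γ j)` with symmetric
pairwise costs, a feasible minimizer of the potential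
`P(γ) = ∑ i (∏_{j≠i} c j)·A i (γ i) + (∏ l c l)·∑_{i<j} B i j (γ i, γ j)` is a
generalized Nash equilibrium. -/
theorem multiagent_own_coefficient_potential_minimizer_is_GNE
    {N : ℕ} (hN : 1 ≤ N)
    (Γ : Fin N → Type*)
    (F : (∀ i, Γ i) → Prop)
    (A : ∀ i : Fin N, Γ i → ℝ)
    (B : ∀ i j : Fin N, Γ i × Γ j → ℝ)
    (hsym : ∀ (i j : Fin N), i ≠ j → ∀ (a : Γ i) (b : Γ j), B i j (a, b) = B j i (b, a))
    (c : Fin N → ℝ) (hc : ∀ i, 0 < c i)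
    (J : Fin N → (∀ i, Γ i) → ℝ)
    (hJ : ∀ (i : Fin N) (γ : ∀ j, Γ j),
      J i γ = A i (γ i) + c i * ∑ j ∈ Finset.univ.erase i, B i j (γ i, γ j))
    (P : (∀ i, Γ i) → ℝ)
    (hP : ∀ γ : ∀ i, Γ i,
      P γ = ∑ i : Fin N, (∏ j ∈ Finset.univ.erase i, c j) * A i (γ i)
        + (∏ l : Fin N, c l)
            * ∑ i : Fin N, ∑ j ∈ Finset.univ.filter (fun j => i < j),
                B i j (γ i, γ j)) :
    ∀ γstar : ∀ i, Γ i, F γstar → (∀ γ, F γ → P γstar ≤ P γ) →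
      ∀ (i : Fin N) (γ'i : Γ i), F (Function.update γstar i γ'i) →
        J i γstar ≤ J i (Function.update γstar i γ'i) :=
  multiagent_own_coefficient_potential_minimizer_is_GNE_general Γ F A B hsym c hc J hJ P hP
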